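/- Let λ > 0, α > 0 with λα < 1, and let X ∼ Poi*_λ(α) be the zero-truncated degenerate Poisson random variable with parameter α. Then for every integer n ≥ 1, E[ C(X+n−1, n) ] = B^{(L,0)}_{n,λ}(α) / n!, where C(·,·) denotes the binomial coefficient and B^{(L,0)}_{n,λ} is the zero-truncated degenerate Lah-Bell polynomial. -/

import Mathlib

/-- The lambda-falling factorial `(x)_{n,lam}`. -/
noncomputable def dffac (lam x : ℝ) (n : ℕ) : ℝ := ∏ i ∈ Finset.range n, (x - i * lam)

/-- The ordinary falling factorial `(x)_n`. -/
noncomputable def ffac (x : ℝ) (n : ℕ) : ℝ := ∏ i ∈ Finset.range n, (x - i)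

/-- The rising factorial. -/
noncomputable def rfac (x : ℝ) (n : ℕ) : ℝ := ∏ i ∈ Finset.range n, (x + i)

/-- Expectation of `f(X)` for the zero-truncated degenerate Poisson random
variable `X ~ Poi*_lam(a)`: the series runs over `i = 1, 2, 3, ...`. -/
noncomputable def ztPoiE (lam a : ℝ) (f : ℕ → ℝ) : ℝ :=
  ((1 + lam * a) ^ (1 / lam) - 1)⁻¹ *
    ∑' i : ℕ, f (i + 1) * dffac lam 1 (i + 1) * a ^ (i + 1) / ((i + 1).factorial : ℝ)

/-- The zero-truncated degenerate Lah-Bell polynomial: n! times the n-th Taylor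
coefficient at t = 0 of t => ((1 + lam*x/(1-t))^(1/lam) - 1)/((1+lam*x)^(1/lam) - 1). -/
noncomputable def ztLahBell (lam x : ℝ) (n : ℕ) : ℝ :=
  iteratedDeriv n
    (fun t : ℝ => ((1 + lam * x / (1 - t)) ^ (1 / lam) - 1) / ((1 + lam * x) ^ (1 / lam) - 1)) 0

open FormalMultilinearSeries
open scoped ENNReal NNReal

lemma ffac_succ (r : ℝ) (i : ℕ) : ffac r (i + 1) = ffac r i * (r - i) :=
  Finset.prod_range_succ _ _

lemma summable_abs_ffac (r u : ℝ) (hu : |u| < 1) :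
    Summable (fun i : ℕ => |ffac r i| / i.factorial * |u| ^ i) := by
  set l : ℝ := (1 + |u|) / 2 with hl
  have hu0 : 0 ≤ |u| := abs_nonneg u
  have hl1 : l < 1 := by rw [hl]; linarith
  have hlu : |u| < l := by rw [hl]; linarith
  apply summable_of_ratio_norm_eventually_le hl1
  rw [Filter.eventually_atTop]
  refine ⟨⌈2 * |r| * |u| / (1 - |u|)⌉₊, fun i hi => ?_⟩
  have hfact : ((i.factorial : ℝ)) > 0 := by positivity
  have h1 : (0:ℝ) ≤ |ffac r i| / i.factorial * |u| ^ i := by positivity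
  have h2 : (0:ℝ) ≤ |ffac r (i+1)| / (i+1).factorial * |u| ^ (i+1) := by positivity
  rw [Real.norm_of_nonneg h2, Real.norm_of_nonneg h1]
  have hiN : (2 * |r| * |u| / (1 - |u|) : ℝ) ≤ i := le_trans (Nat.le_ceil _) (by exact_mod_cast hi)
  have hub : 1 - |u| > 0 := by linarith
  have hru : |r| * |u| ≤ (1 - |u|) / 2 * ((i:ℝ) + 1) := by
    rw [div_le_iff₀ hub] at hiN
    nlinarith [abs_nonneg r]
  have hfs : ((i+1).factorial : ℝ) = ((i:ℝ) + 1) * i.factorial := by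
    rw [Nat.factorial_succ]; push_cast; ring
  have key : |ffac r (i+1)| / (i+1).factorial * |u| ^ (i+1)
      = (|ffac r i| / i.factorial * |u| ^ i) * (|r - i| * |u| / ((i:ℝ)+1)) := by
    rw [ffac_succ, abs_mul, hfs, pow_succ]
    field_simp
  rw [key]
  have hbound : |r - i| * |u| / ((i:ℝ)+1) ≤ l := by
    rw [div_le_iff₀ (by positivity)]
    have : |r - (i:ℝ)| ≤ |r| + i := by
      calc |r - (i:ℝ)| ≤ |r| + |(i:ℝ)| := abs_sub _ _
      _ = |r| + i := by rw [abs_of_nonneg (by positivity : (0:ℝ) ≤ (i:ℝ))]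
    calc |r - (i:ℝ)| * |u| ≤ (|r| + i) * |u| := by nlinarith
    _ = |r| * |u| + (i:ℝ) * |u| := by ring
    _ ≤ (1 - |u|)/2 * ((i:ℝ)+1) + ((i:ℝ)+1) * |u| := by nlinarith
    _ = l * ((i:ℝ)+1) := by rw [hl]; ring
  calc (|ffac r i| / i.factorial * |u| ^ i) * (|r - i| * |u| / ((i:ℝ)+1))
      ≤ (|ffac r i| / i.factorial * |u| ^ i) * l := by nlinarith
  _ = l * (|ffac r i| / i.factorial * |u| ^ i) := by ring

lemma summable_ffac (r u : ℝ) (hu : |u| < 1) :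
    Summable (fun i : ℕ => ffac r i / i.factorial * u ^ i) := by
  apply Summable.of_norm
  have := summable_abs_ffac r u hu
  refine this.congr fun i => ?_
  simp [Real.norm_eq_abs, abs_mul, abs_div, abs_pow, Nat.abs_cast]

theorem hasSum_binomial (r u : ℝ) (hu : |u| < 1) :
    HasSum (fun i : ℕ => ffac r i / i.factorial * u ^ i) ((1 + u) ^ r) := by
  set c : ℕ → ℝ := fun i => ffac r i / i.factorial with hc
  set p : FormalMultilinearSeries ℝ ℝ ℝ := ofScalars ℝ c with hp
  have crec : ∀ m : ℕ, ((m:ℝ) + 1) * c (m + 1) = (r - m) * c m := by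
    intro m
    have hf : ((m+1).factorial : ℝ) = ((m:ℝ) + 1) * m.factorial := by
      rw [Nat.factorial_succ]; push_cast; ring
    have hm0 : (m.factorial : ℝ) ≠ 0 := by positivity
    rw [hc]
    simp only []
    rw [ffac_succ, hf]
    field_simp
  -- radius ≥ 1
  have hrad : 1 ≤ p.radius := by
    apply ENNReal.le_of_forall_nnreal_lt
    intro ρ hρ
    have hρ1 : (ρ : ℝ) < 1 := by exact_mod_cast hρ
    apply p.le_radius_of_summable
    have := summable_abs_ffac r ρ (by rwa [abs_of_nonneg ρ.coe_nonneg])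
    refine this.congr fun i => ?_
    rw [hp, ofScalars_norm, abs_of_nonneg ρ.coe_nonneg]
    simp [hc, Real.norm_eq_abs, abs_div, abs_mul, Nat.abs_cast]
  have hball : HasFPowerSeriesOnBall p.sum p 0 1 :=
    (p.hasFPowerSeriesOnBall (lt_of_lt_of_le one_pos hrad)).mono one_pos hrad
  set S := p.sum with hS
  have hmem : ∀ y : ℝ, |y| < 1 → y ∈ Metric.eball (0:ℝ) 1 := by
    intro y hy
    rw [mem_emetric_ball_zero_iff, ← ENNReal.coe_one, enorm_lt_coe, ← NNReal.coe_lt_coe]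
    simpa [Real.norm_eq_abs] using hy
  have happ : ∀ y : ℝ, (fun n => p n fun _ => y) = fun n => c n * y ^ n := by
    intro y; funext n
    rw [hp, ofScalars_apply_eq, smul_eq_mul]
  have hsum : ∀ y : ℝ, |y| < 1 → HasSum (fun n => c n * y ^ n) (S y) := by
    intro y hy
    have h := hball.hasSum (hmem y hy)
    rw [zero_add, happ y] at h
    exact h
  have hS0 : S 0 = 1 := by
    have h := hsum 0 (by norm_num)
    have h2 : HasSum (fun n => c n * (0:ℝ) ^ n) (c 0 * (0:ℝ) ^ 0) := by
      apply hasSum_single 0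
      intro b hb
      simp [zero_pow hb]
    have h3 := h.unique h2
    rw [h3]
    show ffac r 0 / ((Nat.factorial 0 : ℕ) : ℝ) * (0:ℝ) ^ (0:ℕ) = 1
    rw [ffac]
    norm_num
  -- derivative series
  have hD : ∀ y : ℝ, |y| < 1 →
      HasSum (fun m : ℕ => ((m:ℝ) + 1) * c (m + 1) * y ^ (m + 1)) (y * deriv S y) := by
    intro y hy
    have hf := hball.fderiv
    have h := hf.hasSum (hmem y hy)
    rw [zero_add] at h
    have h2 := h.mapL (ContinuousLinearMap.apply ℝ ℝ y)
    have h3 : HasSum (fun m : ℕ => (p.derivSeries m fun _ => y) y) (fderiv ℝ S y y) := h2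
    have h4 : (fun m : ℕ => (p.derivSeries m fun _ => y) y)
        = fun m : ℕ => ((m:ℝ) + 1) * c (m + 1) * y ^ (m + 1) := by
      funext m
      rw [p.derivSeries_apply_diag, hp, ofScalars_apply_eq, smul_eq_mul, nsmul_eq_mul]
      push_cast
      ring
    have h5 : fderiv ℝ S y y = y * deriv S y := by
      have he : fderiv ℝ S y y = fderiv ℝ S y (y • (1:ℝ)) := by simp
      rw [he, (fderiv ℝ S y).map_smul, smul_eq_mul]
      rw [fderiv_apply_one_eq_deriv]
    rw [h4, h5] at h3
    exact h3
  -- the ODE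
  have hODE : ∀ y : ℝ, |y| < 1 → (1 + y) * deriv S y = r * S y := by
    intro y hy
    rcases eq_or_ne y 0 with rfl | hy0
    · have hder : deriv S 0 = p 1 fun _ => 1 := hball.hasFPowerSeriesAt.deriv
      rw [hS0, hder, hp, ofScalars_apply_eq, smul_eq_mul]
      show (1 + 0) * (ffac r 1 / ((Nat.factorial 1 : ℕ) : ℝ) * (1:ℝ) ^ (1:ℕ)) = r * 1
      rw [ffac]
      norm_num
    · have hB := hD y hy
      have hd : HasSum (fun m : ℕ => ((m:ℝ) + 1) * c (m + 1) * y ^ m) (deriv S y) := by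
        have h6 := hB.div_const y
        rw [mul_div_cancel_left₀ _ hy0] at h6
        have hfe : (fun m : ℕ => ((m:ℝ) + 1) * c (m + 1) * y ^ (m + 1) / y)
            = fun m : ℕ => ((m:ℝ) + 1) * c (m + 1) * y ^ m := by
          funext m
          rw [pow_succ]
          field_simp
        rwa [hfe] at h6
      have hg : HasSum (fun m : ℕ => (m:ℝ) * c m * y ^ m) (y * deriv S y) := by
        have hfe2 : (fun m : ℕ => ((m:ℝ) + 1) * c (m + 1) * y ^ (m + 1))
            = fun m : ℕ => (fun k : ℕ => (k:ℝ) * c k * y ^ k) (m + 1) := by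
          funext m
          push_cast
          ring
        rw [hfe2] at hB
        have h7 := (hasSum_nat_add_iff (f := fun k : ℕ => (k:ℝ) * c k * y ^ k) 1).mp hB
        simpa using h7
      have hsum2 : HasSum (fun m : ℕ => r * (c m * y ^ m)) (r * S y) := (hsum y hy).mul_left r
      have hadd := hd.add hg
      have hfe3 : (fun m : ℕ => ((m:ℝ) + 1) * c (m + 1) * y ^ m + (m:ℝ) * c m * y ^ m)
          = fun m : ℕ => r * (c m * y ^ m) := by
        funext m
        linear_combination y ^ m * crec m
      rw [hfe3] at hadd
      have heq := hadd.unique hsum2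
      linarith
  -- constancy of S y * (1+y)^(-r)
  have hconst : ∀ y ∈ Set.Ioo (-1:ℝ) 1, HasDerivAt (fun t => S t * (1 + t) ^ (-r)) 0 y := by
    intro y hy
    obtain ⟨hy1, hy2⟩ := hy
    have hyabs : |y| < 1 := abs_lt.mpr ⟨hy1, hy2⟩
    have h1y : (0:ℝ) < 1 + y := by linarith
    have hSd : HasDerivAt S (deriv S y) y := by
      have := (hball.analyticAt_of_mem (hmem y hyabs)).differentiableAt
      exact this.hasDerivAt
    have hid : HasDerivAt (fun t : ℝ => 1 + t) 1 y := (hasDerivAt_id y).const_add 1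
    have hpow := hid.rpow_const (p := -r) (Or.inl (ne_of_gt h1y))
    have hprod := hSd.mul hpow
    refine hprod.congr_deriv ?_
    have hsplit : (1 + y) ^ (-r) = (1 + y) * (1 + y) ^ (-r - 1) := by
      have h1 : (1 + y) ^ ((1:ℝ) + (-r - 1)) = (1 + y) ^ (1:ℝ) * (1 + y) ^ (-r - 1) :=
        Real.rpow_add h1y 1 (-r - 1)
      rw [Real.rpow_one] at h1
      rw [← h1]
      norm_num
    rw [hsplit]
    linear_combination ((1 + y) ^ (-r - 1)) * hODE y hyabs
  -- conclude S y = (1+y)^r on Ioo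
  have hSeq : ∀ y : ℝ, |y| < 1 → S y = (1 + y) ^ r := by
    intro y hy
    have hy' : y ∈ Set.Ioo (-1:ℝ) 1 := ⟨(abs_lt.mp hy).1, (abs_lt.mp hy).2⟩
    have h0' : (0:ℝ) ∈ Set.Ioo (-1:ℝ) 1 := by constructor <;> norm_num
    have hdiff : DifferentiableOn ℝ (fun t => S t * (1 + t) ^ (-r)) (Set.Ioo (-1:ℝ) 1) := by
      intro z hz
      exact ((hconst z hz).differentiableAt).differentiableWithinAt
    have hzero : ∀ z ∈ Set.Ioo (-1:ℝ) 1,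
        fderivWithin ℝ (fun t => S t * (1 + t) ^ (-r)) (Set.Ioo (-1:ℝ) 1) z = 0 := by
      intro z hz
      rw [fderivWithin_of_isOpen isOpen_Ioo hz, (hconst z hz).hasFDerivAt.fderiv]
      ext w
      simp
    have hval := (convex_Ioo (-1:ℝ) 1).is_const_of_fderivWithin_eq_zero (𝕜 := ℝ)
      hdiff hzero hy' h0'
    rw [hS0] at hval
    norm_num [Real.one_rpow] at hval
    have h1y : (0:ℝ) < 1 + y := by have := (abs_lt.mp hy).1; linarith
    have hrr : (1 + y) ^ (-r) * (1 + y) ^ r = 1 := by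
      rw [← Real.rpow_add h1y]
      norm_num
    have h2 := congrArg (fun w => w * (1 + y) ^ r) hval
    rwa [mul_assoc, hrr, mul_one, one_mul] at h2
  have hfin := hsum u hu
  rwa [hSeq u hu] at hfin

lemma dffac_eq_ffac (lam : ℝ) (hlam : lam ≠ 0) (i : ℕ) :
    dffac lam 1 i = lam ^ i * ffac (1 / lam) i := by
  have hpow : lam ^ i = ∏ _k ∈ Finset.range i, lam := by
    rw [Finset.prod_const, Finset.card_range]
  rw [dffac, ffac, hpow, ← Finset.prod_mul_distrib]
  refine Finset.prod_congr rfl fun k _ => ?_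
  field_simp

lemma abs_ffac_le (r : ℝ) (hr : 0 ≤ r) (i : ℕ) : |ffac r i| ≤ |ffac (-r) i| := by
  rw [ffac, ffac, Finset.abs_prod, Finset.abs_prod]
  refine Finset.prod_le_prod (fun k _ => abs_nonneg _) fun k _ => ?_
  have h1 : |(-r - (k:ℝ))| = r + k := by
    rw [show (-r - (k:ℝ)) = -(r + k) by ring, abs_neg, abs_of_nonneg (by positivity)]
  rw [h1, abs_le]
  have : (0:ℝ) ≤ (k:ℝ) := Nat.cast_nonneg k
  constructor <;> linarith

lemma ffac_neg_natCast (i m : ℕ) : ffac (-(i:ℝ)) m = (-1) ^ m * rfac (i:ℝ) m := by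
  have hpow : (-1:ℝ) ^ m = ∏ _k ∈ Finset.range m, (-1:ℝ) := by
    rw [Finset.prod_const, Finset.card_range]
  rw [ffac, rfac, hpow, ← Finset.prod_mul_distrib]
  refine Finset.prod_congr rfl fun k _ => ?_
  ring

lemma rfac_choose (i m : ℕ) :
    rfac (i:ℝ) m = (((i + m - 1).choose m : ℕ) : ℝ) * m.factorial := by
  rcases Nat.eq_zero_or_pos i with rfl | hi
  · rcases Nat.eq_zero_or_pos m with rfl | hm
    · simp [rfac]
    · have h1 : rfac ((0:ℕ):ℝ) m = 0 := by
        rw [rfac]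
        apply Finset.prod_eq_zero (Finset.mem_range.mpr hm)
        norm_num
      rw [h1]
      have h2 : (0 + m - 1).choose m = 0 := Nat.choose_eq_zero_of_lt (by omega)
      rw [h2]
      norm_num
  · induction m with
    | zero => simp [rfac]
    | succ m ih =>
      rw [rfac, Finset.prod_range_succ, ← rfac, ih]
      have hnat : (i + m) * (i + m - 1).choose m = (i + (m+1) - 1).choose (m+1) * (m+1) := by
        have h := Nat.add_one_mul_choose_eq (i + m - 1) m
        have : i + m - 1 + 1 = i + m := by omega
        rw [this] at h
        have : i + (m + 1) - 1 = i + m := by omega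
        rw [this]
        exact h
      have hfs : ((m+1).factorial : ℝ) = ((m:ℝ) + 1) * m.factorial := by
        rw [Nat.factorial_succ]; push_cast; ring
      have hnatR : ((i:ℝ) + m) * ((i + m - 1).choose m : ℝ)
          = ((i + (m+1) - 1).choose (m+1) : ℝ) * ((m:ℝ) + 1) := by exact_mod_cast hnat
      rw [hfs]
      push_cast
      push_cast at hnatR ih ⊢
      linear_combination (m.factorial:ℝ) * hnatR

lemma hasSum_degen (lam x : ℝ) (hlam : 0 < lam) (hx : 0 ≤ x) (h : lam * x < 1) :
    HasSum (fun i : ℕ => dffac lam 1 i * x ^ i / i.factorial) ((1 + lam * x) ^ (1 / lam)) := by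
  have habs : |lam * x| < 1 := by
    rw [abs_of_nonneg (by positivity)]; exact h
  have h0 := hasSum_binomial (1 / lam) (lam * x) habs
  have hfe : (fun i : ℕ => ffac (1 / lam) i / i.factorial * (lam * x) ^ i)
      = fun i : ℕ => dffac lam 1 i * x ^ i / i.factorial := by
    funext i
    rw [dffac_eq_ffac lam (ne_of_gt hlam), mul_pow]
    ring
  rwa [hfe] at h0

lemma hasSum_choose (i : ℕ) (t : ℝ) (ht : |t| < 1) :
    HasSum (fun m : ℕ => (((i + m - 1).choose m : ℕ) : ℝ) * t ^ m) ((1 - t) ^ (-(i:ℝ))) := by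
  have habs : |(-t)| < 1 := by rwa [abs_neg]
  have h0 := hasSum_binomial (-(i:ℝ)) (-t) habs
  have h1 : (1 : ℝ) + -t = 1 - t := by ring
  rw [h1] at h0
  have hfe : (fun m : ℕ => ffac (-(i:ℝ)) m / m.factorial * (-t) ^ m)
      = fun m : ℕ => (((i + m - 1).choose m : ℕ) : ℝ) * t ^ m := by
    funext m
    have h2 : ((-1:ℝ)) ^ m * (-1:ℝ) ^ m = 1 := by rw [← mul_pow]; norm_num
    rw [ffac_neg_natCast, rfac_choose, neg_pow]
    have hm : (m.factorial : ℝ) ≠ 0 := by positivity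
    field_simp
    linear_combination (((i + m - 1).choose m : ℕ) : ℝ) * t ^ m * h2
  rwa [hfe] at h0

theorem stmt_11 (lam a : ℝ) (hlam : 0 < lam) (ha : 0 < a) (hla : lam * a < 1)
    (n : ℕ) (hn : 1 ≤ n) :
    ztPoiE lam a (fun i => ((i + n - 1).choose n : ℝ)) =
      ztLahBell lam a n / (n.factorial : ℝ) := by
  unfold ztPoiE ztLahBell
  simp only []
  set ε : ℝ := min (1/2) ((1 - lam * a)/2) with hedef
  have hε : 0 < ε := lt_min (by norm_num) (by linarith)
  have hε2 : ε ≤ 1/2 := min_le_left _ _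
  have hε3 : ε ≤ (1 - lam * a)/2 := min_le_right _ _
  have hεlt1 : ε < 1 := by linarith
  have hyfact : ∀ y : ℝ, |y| ≤ ε → 0 < 1 - y ∧ lam * (a / (1 - y)) < 1 ∧ |y| < 1 := by
    intro y hy
    have h1 := abs_le.mp hy
    have h1y : 0 < 1 - y := by linarith [h1.2]
    refine ⟨h1y, ?_, lt_of_le_of_lt hy hεlt1⟩
    rw [mul_div_assoc', div_lt_one h1y]
    linarith [h1.2]
  set cc : ℕ → ℝ := fun i => dffac lam 1 i * a ^ i / i.factorial with hccdef
  have habscc : ∀ i : ℕ, |cc i| = |ffac (1/lam) i| / i.factorial * (lam * a) ^ i := by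
    intro i
    rw [hccdef]
    simp only []
    rw [abs_div, abs_mul, abs_pow, abs_of_pos ha, Nat.abs_cast,
      dffac_eq_ffac lam (ne_of_gt hlam), abs_mul, abs_pow, abs_of_pos hlam, mul_pow]
    ring
  -- the dominating family at ε
  set G : ℕ × ℕ → ℝ :=
    fun q => |cc q.1| * (((q.1 + q.2 - 1).choose q.2 : ℕ) : ℝ) * ε ^ q.2 with hGdef
  have hGfib : ∀ i : ℕ, HasSum (fun m => G (i, m)) (|cc i| * (1 - ε) ^ (-(i:ℝ))) := by
    intro i
    have h0 := (hasSum_choose i ε (by rwa [abs_of_pos hε])).mul_left |cc i|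
    have hfe : (fun m : ℕ => |cc i| * ((((i + m - 1).choose m : ℕ) : ℝ) * ε ^ m))
        = fun m => G (i, m) := by
      funext m
      rw [hGdef]
      ring
    rwa [hfe] at h0
  have hε1y := hyfact ε (by rw [abs_of_pos hε])
  set w : ℝ := lam * a / (1 - ε) with hwdef
  have hw0 : 0 ≤ w := by
    rw [hwdef]
    exact div_nonneg (by positivity) (le_of_lt hε1y.1)
  have hw1 : w < 1 := by
    rw [hwdef, ← mul_div_assoc']
    exact hε1y.2.1
  have hrowval : ∀ i : ℕ, |cc i| * (1 - ε) ^ (-(i:ℝ))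
      = |ffac (1/lam) i| / i.factorial * w ^ i := by
    intro i
    rw [habscc, Real.rpow_neg (le_of_lt hε1y.1), Real.rpow_natCast, hwdef, div_pow]
    have : ((1:ℝ) - ε) ^ i ≠ 0 := pow_ne_zero _ (ne_of_gt hε1y.1)
    field_simp
  have hsumrow : Summable (fun i : ℕ => |cc i| * (1 - ε) ^ (-(i:ℝ))) := by
    apply Summable.of_nonneg_of_le
      (fun i => mul_nonneg (abs_nonneg _) (Real.rpow_nonneg (le_of_lt hε1y.1) _))
      ?_ (summable_abs_ffac (-(1/lam)) w (by rwa [abs_of_nonneg hw0]))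
    intro i
    rw [hrowval i, abs_of_nonneg hw0]
    have h1 := abs_ffac_le (1/lam) (by positivity) i
    have h3 : (0:ℝ) < (i.factorial : ℝ) := by positivity
    exact mul_le_mul_of_nonneg_right ((div_le_div_iff_of_pos_right h3).mpr h1) (pow_nonneg hw0 i)
  have hGnn : 0 ≤ G := by
    intro q
    rw [hGdef]
    positivity
  have hG : Summable G := by
    rw [summable_prod_of_nonneg hGnn]
    constructor
    · intro i
      exact (hGfib i).summable
    · have hfe : (fun i : ℕ => ∑' m, G (i, m)) = fun i => |cc i| * (1 - ε) ^ (-(i:ℝ)) := by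
        funext i
        exact (hGfib i).tsum_eq
      rw [hfe]
      exact hsumrow
  have hcolS : ∀ m : ℕ, Summable (fun i : ℕ => |cc i| * (((i + m - 1).choose m : ℕ) : ℝ)) := by
    intro m
    have h1 : Summable (G ∘ fun i : ℕ => (i, m)) :=
      hG.comp_injective (fun x y hxy => (Prod.ext_iff.mp hxy).1)
    have h2 := h1.mul_right ((ε ^ m)⁻¹)
    have hfe : (fun i : ℕ => (G ∘ fun i : ℕ => (i, m)) i * (ε ^ m)⁻¹)
        = fun i : ℕ => |cc i| * (((i + m - 1).choose m : ℕ) : ℝ) := by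
      funext i
      have hpm : (ε : ℝ) ^ m ≠ 0 := pow_ne_zero _ (ne_of_gt hε)
      simp only [Function.comp, hGdef]
      field_simp
    rwa [hfe] at h2
  have hcolS' : ∀ m : ℕ, Summable (fun i : ℕ => cc i * (((i + m - 1).choose m : ℕ) : ℝ)) := by
    intro m
    apply Summable.of_norm
    refine (hcolS m).congr fun i => ?_
    rw [Real.norm_eq_abs, abs_mul, Nat.abs_cast]
  set s : ℕ → ℝ := fun m => ∑' i : ℕ, cc i * (((i + m - 1).choose m : ℕ) : ℝ) with hsdef
  have hkey : ∀ y : ℝ, |y| ≤ ε →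
      HasSum (fun m : ℕ => s m * y ^ m) ((1 + lam * a / (1 - y)) ^ (1 / lam)) := by
    intro y hy
    obtain ⟨h1y, hlay, hy1⟩ := hyfact y hy
    set F : ℕ × ℕ → ℝ :=
      fun q => cc q.1 * (((q.1 + q.2 - 1).choose q.2 : ℕ) : ℝ) * y ^ q.2 with hFdef
    have hFnorm : Summable (fun q => ‖F q‖) := by
      apply Summable.of_nonneg_of_le (fun q => norm_nonneg _) ?_ hG
      intro q
      rw [hFdef]
      simp only [Real.norm_eq_abs, abs_mul, Nat.abs_cast, abs_pow, hGdef]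
      have h2 : |y| ^ q.2 ≤ ε ^ q.2 := pow_le_pow_left₀ (abs_nonneg y) hy q.2
      have h3 : (0:ℝ) ≤ |cc q.1| * (((q.1 + q.2 - 1).choose q.2 : ℕ) : ℝ) :=
        mul_nonneg (abs_nonneg _) (Nat.cast_nonneg _)
      exact mul_le_mul_of_nonneg_left h2 h3
    have hFsum : Summable F := Summable.of_norm hFnorm
    have htot := hFsum.hasSum
    have hrow : ∀ i : ℕ, HasSum (fun m => F (i, m)) (cc i * (1 - y) ^ (-(i:ℝ))) := by
      intro i
      have h0 := (hasSum_choose i y hy1).mul_left (cc i)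
      have hfe : (fun m : ℕ => cc i * ((((i + m - 1).choose m : ℕ) : ℝ) * y ^ m))
          = fun m => F (i, m) := by
        funext m
        rw [hFdef]
        ring
      rwa [hfe] at h0
    have h8 := htot.prod_fiberwise hrow
    have h9 : HasSum (fun i : ℕ => cc i * (1 - y) ^ (-(i:ℝ)))
        ((1 + lam * a / (1 - y)) ^ (1 / lam)) := by
      have hx0 : 0 ≤ a / (1 - y) := div_nonneg (le_of_lt ha) (le_of_lt h1y)
      have h0 := hasSum_degen lam (a / (1 - y)) hlam hx0 hlay
      have hfe : (fun i : ℕ => dffac lam 1 i * (a / (1 - y)) ^ i / i.factorial)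
          = fun i : ℕ => cc i * (1 - y) ^ (-(i:ℝ)) := by
        funext i
        rw [Real.rpow_neg (le_of_lt h1y), Real.rpow_natCast, hccdef, div_pow]
        simp only []
        have hne : ((1:ℝ) - y) ^ i ≠ 0 := pow_ne_zero _ (ne_of_gt h1y)
        field_simp
      have harg : 1 + lam * (a / (1 - y)) = 1 + lam * a / (1 - y) := by
        rw [mul_div_assoc']
      rwa [hfe, harg] at h0
    have heq := h8.unique h9
    have hcol : ∀ m : ℕ, HasSum (fun i => F (i, m)) (s m * y ^ m) := by
      intro m
      have h0 := (hcolS' m).hasSum.mul_right (y ^ m)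
      have hsm : s m = ∑' i : ℕ, cc i * (((i + m - 1).choose m : ℕ) : ℝ) := by rw [hsdef]
      rw [← hsm] at h0
      have hfe : (fun i : ℕ => cc i * (((i + m - 1).choose m : ℕ) : ℝ) * y ^ m)
          = fun i => F (i, m) := by
        funext i
        rw [hFdef]
      rwa [hfe] at h0
    have hswap : HasSum (F ∘ ⇑(Equiv.prodComm ℕ ℕ)) (∑' q, F q) :=
      (Equiv.hasSum_iff (Equiv.prodComm ℕ ℕ)).mpr htot
    have h10 := hswap.prod_fiberwise (g := fun m => s m * y ^ m) (fun m => hcol m)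
    rwa [heq] at h10
  set C : ℝ := (1 + lam * a) ^ (1 / lam) - 1 with hCdef
  set Q : ℕ → ℝ := fun m => C⁻¹ * s m - (if m = 0 then C⁻¹ else 0) with hQdef
  have hQs : ∀ y : ℝ, |y| ≤ ε → HasSum (fun m : ℕ => Q m * y ^ m)
      (((1 + lam * a / (1 - y)) ^ (1 / lam) - 1) / C) := by
    intro y hy
    have h1 := (hkey y hy).mul_left C⁻¹
    have h2 : HasSum (fun m : ℕ => if m = 0 then C⁻¹ else 0) C⁻¹ := hasSum_ite_eq 0 C⁻¹
    have h3 := h1.sub h2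
    have hfe : (fun m : ℕ => C⁻¹ * (s m * y ^ m) - if m = 0 then C⁻¹ else 0)
        = fun m : ℕ => Q m * y ^ m := by
      funext m
      rcases eq_or_ne m 0 with rfl | hm
      · rw [hQdef]
        simp
      · rw [hQdef]
        simp only [if_neg hm]
        ring
    have hval : C⁻¹ * ((1 + lam * a / (1 - y)) ^ (1 / lam)) - C⁻¹
        = ((1 + lam * a / (1 - y)) ^ (1 / lam) - 1) / C := by
      rw [div_eq_mul_inv]
      ring
    rw [hfe, hval] at h3
    exact h3
  set p : FormalMultilinearSeries ℝ ℝ ℝ := ofScalars ℝ Q with hpdef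
  set T : ℕ → ℝ := fun m => ∑' i : ℕ, |cc i| * (((i + m - 1).choose m : ℕ) : ℝ) with hTdef
  have hGcol : ∀ m : ℕ, HasSum (fun i => G (i, m)) (T m * ε ^ m) := by
    intro m
    have h0 := (hcolS m).hasSum.mul_right (ε ^ m)
    have hTm : T m = ∑' i : ℕ, |cc i| * (((i + m - 1).choose m : ℕ) : ℝ) := by rw [hTdef]
    rw [← hTm] at h0
    have hfe : (fun i : ℕ => |cc i| * (((i + m - 1).choose m : ℕ) : ℝ) * ε ^ m)
        = fun i => G (i, m) := by
      funext i
      rw [hGdef]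
    rwa [hfe] at h0
  have hGswap : HasSum (G ∘ ⇑(Equiv.prodComm ℕ ℕ)) (∑' q, G q) :=
    (Equiv.hasSum_iff (Equiv.prodComm ℕ ℕ)).mpr hG.hasSum
  have hu : Summable (fun m : ℕ => T m * ε ^ m) :=
    ⟨∑' q, G q, hGswap.prod_fiberwise (fun m => hGcol m)⟩
  have hsT : ∀ m : ℕ, |s m| ≤ T m := by
    intro m
    rw [hsdef, hTdef]
    simp only []
    have hsn : Summable (fun i : ℕ => ‖cc i * (((i + m - 1).choose m : ℕ) : ℝ)‖) :=
      (hcolS m).congr fun i => by rw [Real.norm_eq_abs, abs_mul, Nat.abs_cast]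
    have h1 := norm_tsum_le_tsum_norm hsn
    calc |∑' i : ℕ, cc i * (((i + m - 1).choose m : ℕ) : ℝ)|
        = ‖∑' i : ℕ, cc i * (((i + m - 1).choose m : ℕ) : ℝ)‖ := (Real.norm_eq_abs _).symm
      _ ≤ ∑' i : ℕ, ‖cc i * (((i + m - 1).choose m : ℕ) : ℝ)‖ := h1
      _ = ∑' i : ℕ, |cc i| * (((i + m - 1).choose m : ℕ) : ℝ) :=
          tsum_congr fun i => by rw [Real.norm_eq_abs, abs_mul, Nat.abs_cast]
  have hcoe : ((ε.toNNReal : ℝ≥0) : ℝ) = ε := Real.coe_toNNReal _ (le_of_lt hε)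
  have hrady : Summable (fun m : ℕ => ‖p m‖ * ((ε.toNNReal : ℝ≥0) : ℝ) ^ m) := by
    have hmaj : Summable (fun m : ℕ => |C⁻¹| * (T m * ε ^ m) + (if m = 0 then |C⁻¹| else 0)) :=
      (hu.mul_left (|C⁻¹|)).add ((hasSum_ite_eq (0:ℕ) (|C⁻¹|)).summable)
    apply Summable.of_nonneg_of_le ?_ ?_ hmaj
    · intro m
      positivity
    · intro m
      rw [hpdef, ofScalars_norm, hcoe, Real.norm_eq_abs]
      have hQb : |Q m| ≤ |C⁻¹| * T m + (if m = 0 then |C⁻¹| else 0) := by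
        rw [hQdef]
        simp only []
        refine (abs_sub _ _).trans ?_
        have e1 : |C⁻¹ * s m| ≤ |C⁻¹| * T m := by
          rw [abs_mul]
          exact mul_le_mul_of_nonneg_left (hsT m) (abs_nonneg _)
        have e2 : |if m = 0 then C⁻¹ else 0| = (if m = 0 then |C⁻¹| else 0) := by
          rcases eq_or_ne m 0 with rfl | hm
          · simp
          · simp [hm]
        linarith [e1, le_of_eq e2]
      have hεp : (0:ℝ) ≤ ε ^ m := by positivity
      have h2 : |Q m| * ε ^ m ≤ (|C⁻¹| * T m + (if m = 0 then |C⁻¹| else 0)) * ε ^ m :=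
        mul_le_mul_of_nonneg_right hQb hεp
      refine h2.trans ?_
      have hite : (if m = 0 then |C⁻¹| else 0) * ε ^ m ≤ (if m = 0 then |C⁻¹| else 0) := by
        rcases eq_or_ne m 0 with rfl | hm
        · simp
        · simp [hm]
      calc (|C⁻¹| * T m + (if m = 0 then |C⁻¹| else 0)) * ε ^ m
          = |C⁻¹| * (T m * ε ^ m) + (if m = 0 then |C⁻¹| else 0) * ε ^ m := by ring
        _ ≤ |C⁻¹| * (T m * ε ^ m) + (if m = 0 then |C⁻¹| else 0) := by linarith [hite]
  have hfp : HasFPowerSeriesOnBall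
      (fun t : ℝ => ((1 + lam * a / (1 - t)) ^ (1 / lam) - 1) / C) p 0 (ε.toNNReal : ℝ≥0∞) := by
    refine ⟨p.le_radius_of_summable hrady, ENNReal.coe_pos.mpr (Real.toNNReal_pos.mpr hε), ?_⟩
    intro y hy
    rw [mem_emetric_ball_zero_iff, enorm_lt_coe, ← NNReal.coe_lt_coe, hcoe,
      coe_nnnorm, Real.norm_eq_abs] at hy
    have h := hQs y (le_of_lt hy)
    rw [zero_add]
    have hfe : (fun m : ℕ => p m fun _ => y) = fun m : ℕ => Q m * y ^ m := by
      funext m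
      rw [hpdef, ofScalars_apply_eq, smul_eq_mul]
    rw [hfe]
    exact h
  have hQn : iteratedDeriv n (fun t : ℝ => ((1 + lam * a / (1 - t)) ^ (1 / lam) - 1) / C) 0
      = (n.factorial : ℝ) * Q n := by
    rw [iteratedDeriv_eq_iteratedFDeriv, ← hfp.factorial_smul (1:ℝ) n]
    rw [hpdef, ofScalars_apply_eq]
    simp [nsmul_eq_mul, smul_eq_mul]
  rw [hQn]
  have hnfac : ((n.factorial : ℕ) : ℝ) ≠ 0 := by positivity
  rw [mul_div_cancel_left₀ _ hnfac]
  rw [hQdef]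
  simp only [if_neg (by omega : n ≠ 0), sub_zero]
  congr 1
  rw [hsdef]
  simp only []
  rw [Summable.tsum_eq_zero_add (hcolS' n)]
  have h0 : cc 0 * (((0 + n - 1).choose n : ℕ) : ℝ) = 0 := by
    have hch : (0 + n - 1).choose n = 0 := Nat.choose_eq_zero_of_lt (by omega)
    rw [hch]
    simp
  rw [h0, zero_add]
  apply tsum_congr
  intro i
  rw [hccdef]
  simp only []
  ring
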